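/- In the Minkowski space L³₁ with inner product ⟨x, y⟩ = x₁y₁ − x₂y₂ − x₃y₃, let c : [0,L] → L²₁ (the x₃ = 0 plane) be a unit-speed time-like convex curve and c̃ : [0,L] → L³₁ a unit-speed time-like curve with curvatures satisfying k(s) ≥ |k̃(s)|. Then for any s* ∈ [0,L] and any isometric inclusion ι : L²₁ → L³₁ identifying T(s*) with T̃(s*), the function I₂(s) = ⟨ι(c(s)) − c̃(s), T̃(s*)⟩ satisfies I₂'(s) = ⟨ι(T(s)) − T̃(s), T̃(s*)⟩ ≥ 0 for all s. -/

import Mathlib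

/-- The Minkowski bilinear form on `L³₁` with signature `(+, −, −)`. -/
def mink (x y : Fin 3 → ℝ) : ℝ := x 0 * y 0 - x 1 * y 1 - x 2 * y 2

lemma mink_orth_spacelike (u q : Fin 3 → ℝ) (hu : mink u u = 1) (hq : mink q u = 0) :
    mink q q ≤ 0 := by
  simp only [mink] at *
  have h1 : q 0 * u 0 = q 1 * u 1 + q 2 * u 2 := by linarith
  have h3 : (q 1 * u 1 + q 2 * u 2) ^ 2 ≤ (q 1 ^ 2 + q 2 ^ 2) * (u 1 ^ 2 + u 2 ^ 2) := by
    nlinarith [sq_nonneg (q 1 * u 2 - q 2 * u 1)]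
  have h4 : q 0 ^ 2 * (1 + u 1 ^ 2 + u 2 ^ 2) ≤ (q 1 ^ 2 + q 2 ^ 2) * (u 1 ^ 2 + u 2 ^ 2) := by
    have : q 0 ^ 2 * (u 0 ^ 2) = (q 1 * u 1 + q 2 * u 2) ^ 2 := by
      rw [← mul_pow, h1]
    nlinarith [h3, this]
  nlinarith [h4, sq_nonneg (u 1), sq_nonneg (u 2), sq_nonneg (q 0),
    mul_nonneg (sq_nonneg (u 1)) (sq_nonneg (q 0)), mul_nonneg (sq_nonneg (u 2)) (sq_nonneg (q 0))]

/-- Two future-directed unit timelike vectors have inner product ≥ 1. -/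

lemma mink_ge_one (u v : Fin 3 → ℝ) (hu : mink u u = 1) (hv : mink v v = 1)
    (hu0 : 0 < u 0) (hv0 : 0 < v 0) : 1 ≤ mink u v := by
  simp only [mink] at *
  by_cases hs : u 1 * v 1 + u 2 * v 2 + 1 ≤ 0
  · nlinarith [mul_pos hu0 hv0]
  · push_neg at hs
    have h2s : 2 * (u 1 * v 1 + u 2 * v 2) ≤ (u 1 ^ 2 + u 2 ^ 2) + (v 1 ^ 2 + v 2 ^ 2) := by
      nlinarith [sq_nonneg (u 1 - v 1), sq_nonneg (u 2 - v 2)]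
    have hcs : (u 1 * v 1 + u 2 * v 2) ^ 2 ≤ (u 1 ^ 2 + u 2 ^ 2) * (v 1 ^ 2 + v 2 ^ 2) := by
      nlinarith [sq_nonneg (u 1 * v 2 - u 2 * v 1)]
    have hA : u 0 ^ 2 = 1 + u 1 ^ 2 + u 2 ^ 2 := by nlinarith
    have hB : v 0 ^ 2 = 1 + v 1 ^ 2 + v 2 ^ 2 := by nlinarith
    have hAB : (u 0 * v 0) ^ 2 = (1 + u 1 ^ 2 + u 2 ^ 2) * (1 + v 1 ^ 2 + v 2 ^ 2) := by
      rw [mul_pow, hA, hB]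
    have hsq : (1 + (u 1 * v 1 + u 2 * v 2)) ^ 2 ≤ (u 0 * v 0) ^ 2 := by
      nlinarith [h2s, hcs, hAB]
    nlinarith [hsq, hs, mul_pos hu0 hv0]

lemma mink_cs (u v p : Fin 3 → ℝ) (hu : mink u u = 1) (hv : mink v v = 1)
    (hu0 : 0 < u 0) (hv0 : 0 < v 0) (hp : mink p u = 0) :
    |mink p v| ≤ Real.sqrt (-(mink p p)) * Real.sqrt ((mink u v) ^ 2 - 1) := by
  have hg1 : 1 ≤ mink u v := mink_ge_one u v hu hv hu0 hv0
  set g : ℝ := mink u v with hg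
  set w : Fin 3 → ℝ := v - g • u with hw
  have hwapp : ∀ i, w i = v i - g * u i := fun i => rfl
  have hwu : mink w u = 0 := by
    simp only [mink, hwapp]; simp only [mink] at hu hg; linear_combination -hg - g * hu
  have hww : mink w w = 1 - g ^ 2 := by
    simp only [mink, hwapp]; simp only [mink] at hu hv hg
    linear_combination hv + g ^ 2 * hu + 2 * g * hg
  have hpw : mink p v = mink p w := by
    simp only [mink, hwapp]; simp only [mink] at hp; linear_combination g * hp
  have hquad : ∀ t : ℝ, 0 ≤ (g ^ 2 - 1) * (t * t) + (-2 * mink p w) * t + (-(mink p p)) := by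
    intro t
    have horth : mink (p + t • w) u = 0 := by
      simp only [mink, Pi.add_apply, Pi.smul_apply, smul_eq_mul] at *
      linear_combination hp + t * hwu
    have := mink_orth_spacelike u (p + t • w) hu horth
    simp only [mink, Pi.add_apply, Pi.smul_apply, smul_eq_mul] at this hww ⊢
    nlinarith [this, hww]
  have hdisc := discrim_le_zero hquad
  rw [discrim] at hdisc
  have hkey : (mink p w) ^ 2 ≤ (g ^ 2 - 1) * (-(mink p p)) := by nlinarith [hdisc]
  have hpp : 0 ≤ -(mink p p) := neg_nonneg.2 (mink_orth_spacelike u p hu hp)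
  rw [hpw]
  calc |mink p w| = Real.sqrt ((mink p w) ^ 2) := (Real.sqrt_sq_eq_abs _).symm
    _ ≤ Real.sqrt ((g ^ 2 - 1) * (-(mink p p))) := Real.sqrt_le_sqrt hkey
    _ = Real.sqrt (-(mink p p)) * Real.sqrt (g ^ 2 - 1) := by
        rw [mul_comm, Real.sqrt_mul hpp]

lemma comp_aux (a b : ℝ) (g g' φ k : ℝ → ℝ)
    (hg : ∀ s ∈ Set.Icc a b, HasDerivAt g (g' s) s)
    (hφ : ∀ s ∈ Set.Icc a b, HasDerivAt φ (k s) s)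
    (hk : ∀ s ∈ Set.Icc a b, 0 ≤ k s)
    (hbound : ∀ s ∈ Set.Icc a b, |g' s| ≤ k s * Real.sqrt (g s ^ 2 - 1))
    (hga : g a = 1) :
    ∀ s ∈ Set.Icc a b, g s ≤ Real.cosh (φ s - φ a) := by
  intro s hs
  have hab : a ≤ b := le_trans hs.1 hs.2
  have hφc : ContinuousOn φ (Set.Icc a b) :=
    fun x hx => (hφ x hx).continuousAt.continuousWithinAt
  have hmono : MonotoneOn φ (Set.Icc a b) := by
    apply monotoneOn_of_deriv_nonneg (convex_Icc a b) hφc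
    · intro x hx
      rw [interior_Icc] at hx
      exact (hφ x (Set.Ioo_subset_Icc_self hx)).differentiableAt.differentiableWithinAt
    · intro x hx
      rw [interior_Icc] at hx
      rw [(hφ x (Set.Ioo_subset_Icc_self hx)).deriv]
      exact hk x (Set.Ioo_subset_Icc_self hx)
  have key : ∀ ε > 0, g s ≤ Real.cosh (φ s - φ a + (ε * (s - a) + ε)) := by
    intro ε hε
    have hψ : ∀ x ∈ Set.Icc a b,
        HasDerivAt (fun y => φ y - φ a + (ε * (y - a) + ε)) (k x + ε) x := by
      intro x hx
      have h1 : HasDerivAt (fun y => φ y - φ a) (k x) x := (hφ x hx).sub_const _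
      have h2 : HasDerivAt (fun y => ε * (y - a) + ε) (ε * 1) x :=
        (((hasDerivAt_id x).sub_const a).const_mul ε).add_const ε
      have h := h1.add h2; rw [mul_one] at h; exact h
    have hBd : ∀ x ∈ Set.Icc a b,
        HasDerivAt (fun y => Real.cosh (φ y - φ a + (ε * (y - a) + ε)))
          (Real.sinh (φ x - φ a + (ε * (x - a) + ε)) * (k x + ε)) x :=
      fun x hx => (hψ x hx).cosh
    have main := image_le_of_deriv_right_lt_deriv_boundary'
      (f := g) (f' := g') (a := a) (b := b)
      (B := fun y => Real.cosh (φ y - φ a + (ε * (y - a) + ε)))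
      (B' := fun x => Real.sinh (φ x - φ a + (ε * (x - a) + ε)) * (k x + ε))
      (fun x hx => (hg x hx).continuousAt.continuousWithinAt)
      (fun x hx => (hg x (Set.Ico_subset_Icc_self hx)).hasDerivWithinAt)
      (by
        rw [hga]
        simp only [sub_self, mul_zero, zero_add]
        exact Real.one_le_cosh ε)
      (fun x hx => (hBd x hx).continuousAt.continuousWithinAt)
      (fun x hx => (hBd x (Set.Ico_subset_Icc_self hx)).hasDerivWithinAt)
      (by
        intro x hx hgx
        have hxI : x ∈ Set.Icc a b := Set.Ico_subset_Icc_self hx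
        set ψ : ℝ := φ x - φ a + (ε * (x - a) + ε) with hψdef
        have hψpos : 0 < ψ := by
          have h1 : φ a ≤ φ x := hmono ⟨le_refl a, hab⟩ hxI hx.1
          have h2 : 0 ≤ ε * (x - a) := mul_nonneg hε.le (sub_nonneg.2 hx.1)
          simp only [hψdef]; linarith
        have hsinh : 0 < Real.sinh ψ := Real.sinh_pos_iff.2 hψpos
        have hsqrt : Real.sqrt (g x ^ 2 - 1) = Real.sinh ψ := by
          rw [hgx]
          have : Real.cosh ψ ^ 2 - 1 = Real.sinh ψ ^ 2 := by
            have := Real.cosh_sq ψ; linarith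
          rw [this, Real.sqrt_sq hsinh.le]
        calc g' x ≤ |g' x| := le_abs_self _
          _ ≤ k x * Real.sqrt (g x ^ 2 - 1) := hbound x hxI
          _ = Real.sinh ψ * k x := by rw [hsqrt]; ring
          _ < Real.sinh ψ * (k x + ε) := by
              apply mul_lt_mul_of_pos_left _ hsinh
              linarith)
    exact main hs
  -- take ε → 0⁺
  have hc : ContinuousOn g (Set.Icc a b) :=
    fun x hx => (hg x hx).continuousAt.continuousWithinAt
  have htend : Filter.Tendsto (fun ε : ℝ => Real.cosh (φ s - φ a + (ε * (s - a) + ε)))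
      (nhdsWithin 0 (Set.Ioi 0)) (nhds (Real.cosh (φ s - φ a))) := by
    have : Continuous (fun ε : ℝ => Real.cosh (φ s - φ a + (ε * (s - a) + ε))) := by
      continuity
    have h0 := this.tendsto 0
    simp only [zero_mul, mul_zero, add_zero, zero_add] at h0
    exact h0.mono_left nhdsWithin_le_nhds
  refine ge_of_tendsto htend ?_
  filter_upwards [self_mem_nhdsWithin] with ε hε
  exact key ε hε

lemma hasDerivAt_mink_left {f : ℝ → Fin 3 → ℝ} {D : Fin 3 → ℝ} (v : Fin 3 → ℝ) {s : ℝ}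
    (h : HasDerivAt f D s) :
    HasDerivAt (fun u => mink (f u) v) (mink D v) s := by
  have hi := hasDerivAt_pi.mp h
  simp only [mink]
  exact (((hi 0).mul_const (v 0)).sub ((hi 1).mul_const (v 1))).sub ((hi 2).mul_const (v 2))

/-- **Minkowski monotonicity (Schur's theorem in `L³₁`).**  Let `c` be a unit-speed time-like
convex curve in the plane `L²₁ = {x₃ = 0}` of `L³₁`, with tangent
`T s = (cosh (φ s), sinh (φ s), 0)` and curvature `k = φ' ≥ 0`, and let `ct` be a unit-speed
time-like curve in `L³₁` with tangent `Tt` and curvature `|kt s| = √(−⟨Tt' s, Tt' s⟩) ≤ k s`.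
Then for any `s* ∈ [0,L]` and any linear isometric inclusion `ι : L²₁ → L³₁` with
`ι (T s*) = Tt s*`, the function `I₂ s = ⟨ι (c s) − ct s, Tt s*⟩` satisfies
`I₂' s = ⟨ι (T s) − Tt s, Tt s*⟩ ≥ 0` for all `s ∈ [0,L]`. -/
theorem minkowski_schur_monotonicity
    (L : ℝ) (hL : 0 < L)
    (c : ℝ → Fin 3 → ℝ) (φ k : ℝ → ℝ) (T : ℝ → Fin 3 → ℝ)
    (ct Tt Tt' : ℝ → Fin 3 → ℝ)
    -- c lies in the plane L²₁ and has unit time-like tangent T with hyperbolic angle φ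
    (hplane : ∀ s, c s 2 = 0)
    (hT : ∀ s, T s = ![Real.cosh (φ s), Real.sinh (φ s), 0])
    (hc : ∀ s ∈ Set.Icc 0 L, HasDerivAt c (T s) s)
    -- curvature of c is k = φ', convexity: k ≥ 0
    (hφ : ∀ s ∈ Set.Icc 0 L, HasDerivAt φ (k s) s)
    (hk : ∀ s ∈ Set.Icc 0 L, 0 ≤ k s)
    -- ct is unit-speed time-like (future directed)
    (hct : ∀ s ∈ Set.Icc 0 L, HasDerivAt ct (Tt s) s)
    (hunitt : ∀ s ∈ Set.Icc 0 L, mink (Tt s) (Tt s) = 1)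
    (hfuture : ∀ s ∈ Set.Icc 0 L, 0 < Tt s 0)
    (hTt : ∀ s ∈ Set.Icc 0 L, HasDerivAt Tt (Tt' s) s)
    -- curvature comparison: k ≥ |kt| (Tt' is space-like, of length √(−⟨Tt', Tt'⟩))
    (hcomp : ∀ s ∈ Set.Icc 0 L, Real.sqrt (-(mink (Tt' s) (Tt' s))) ≤ k s)
    (sstar : ℝ) (hstar : sstar ∈ Set.Icc 0 L)
    (ι : (Fin 3 → ℝ) →ₗ[ℝ] (Fin 3 → ℝ))
    -- ι is an isometric inclusion of the plane L²₁ into L³₁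
    (hι : ∀ x y : Fin 3 → ℝ, x 2 = 0 → y 2 = 0 → mink (ι x) (ι y) = mink x y)
    (hιT : ι (T sstar) = Tt sstar) :
    ∀ s ∈ Set.Icc 0 L,
      HasDerivAt (fun u => mink (ι (c u) - ct u) (Tt sstar))
        (mink (ι (T s) - Tt s) (Tt sstar)) s ∧
      0 ≤ mink (ι (T s) - Tt s) (Tt sstar) := by
  -- the comparison function
  set g : ℝ → ℝ := fun s => mink (Tt s) (Tt sstar) with hgdef
  set g' : ℝ → ℝ := fun s => mink (Tt' s) (Tt sstar) with hg'def
  have hgderiv : ∀ s ∈ Set.Icc 0 L, HasDerivAt g (g' s) s :=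
    fun s hs => hasDerivAt_mink_left (Tt sstar) (hTt s hs)
  -- orthogonality ⟨Tt', Tt⟩ = 0
  have horth : ∀ s ∈ Set.Icc 0 L, mink (Tt' s) (Tt s) = 0 := by
    intro s hs
    have hi := hasDerivAt_pi.mp (hTt s hs)
    have hF : HasDerivAt (fun u => mink (Tt u) (Tt u)) (2 * mink (Tt' s) (Tt s)) s := by
      have := (((hi 0).mul (hi 0)).sub ((hi 1).mul (hi 1))).sub ((hi 2).mul (hi 2))
      refine this.congr_deriv ?_
      simp only [mink]; ring
    have hconst : HasDerivWithinAt (fun u => mink (Tt u) (Tt u)) 0 (Set.Icc 0 L) s :=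
      (hasDerivWithinAt_const s _ (1 : ℝ)).congr (fun y hy => hunitt y hy) (hunitt s hs)
    have := (uniqueDiffOn_Icc hL s hs).eq_deriv _ hF.hasDerivWithinAt hconst
    linarith
  -- the bound |g'| ≤ k √(g²−1)
  have hbound : ∀ s ∈ Set.Icc 0 L, |g' s| ≤ k s * Real.sqrt (g s ^ 2 - 1) := by
    intro s hs
    have hcs := mink_cs (Tt s) (Tt sstar) (Tt' s) (hunitt s hs) (hunitt sstar hstar)
      (hfuture s hs) (hfuture sstar hstar) (horth s hs)
    calc |g' s| ≤ Real.sqrt (-(mink (Tt' s) (Tt' s))) * Real.sqrt (g s ^ 2 - 1) := hcs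
      _ ≤ k s * Real.sqrt (g s ^ 2 - 1) :=
        mul_le_mul_of_nonneg_right (hcomp s hs) (Real.sqrt_nonneg _)
  -- the key distance comparison
  have key : ∀ s ∈ Set.Icc 0 L, g s ≤ Real.cosh (φ s - φ sstar) := by
    intro s hs
    rcases le_total sstar s with hcase | hcase
    · -- right of sstar
      have hsub : Set.Icc sstar L ⊆ Set.Icc 0 L :=
        Set.Icc_subset_Icc hstar.1 le_rfl
      exact comp_aux sstar L g g' φ k (fun x hx => hgderiv x (hsub hx))
        (fun x hx => hφ x (hsub hx)) (fun x hx => hk x (hsub hx))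
        (fun x hx => hbound x (hsub hx)) (hunitt sstar hstar) s ⟨hcase, hs.2⟩
    · -- left of sstar: reflect
      have hsub : ∀ t ∈ Set.Icc (-sstar) (0 : ℝ), -t ∈ Set.Icc 0 L := by
        intro t ht
        exact ⟨neg_nonneg.2 ht.2, le_trans (neg_le.2 ht.1) hstar.2⟩
      have hres := comp_aux (-sstar) 0 (fun t => g (-t)) (fun t => -(g' (-t)))
        (fun t => -(φ (-t))) (fun t => k (-t))
        (fun t ht => by
          have := (hgderiv (-t) (hsub t ht)).comp t (hasDerivAt_neg t)
          refine this.congr_deriv ?_; ring)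
        (fun t ht => by
          have := ((hφ (-t) (hsub t ht)).comp t (hasDerivAt_neg t)).neg
          refine this.congr_deriv ?_; ring)
        (fun t ht => hk (-t) (hsub t ht))
        (fun t ht => by
          rw [abs_neg]; exact hbound (-t) (hsub t ht))
        (by show g (- -sstar) = 1; rw [neg_neg]; exact hunitt sstar hstar)
        (-s) ⟨neg_le_neg hcase, neg_nonpos.2 hs.1⟩
      simp only [neg_neg] at hres
      rwa [show -φ s - -φ sstar = -(φ s - φ sstar) by ring, Real.cosh_neg] at hres
  -- identification of mink (ι (T s)) (Tt sstar)
  have hT2 : ∀ x, T x 2 = 0 := by intro x; rw [hT]; rfl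
  have hiota : ∀ s, mink (ι (T s)) (Tt sstar) = Real.cosh (φ s - φ sstar) := by
    intro s
    rw [← hιT, hι (T s) (T sstar) (hT2 s) (hT2 sstar), hT s, hT sstar]
    simp only [mink, Matrix.cons_val_zero, Matrix.cons_val_one, Matrix.head_cons,
      Matrix.cons_val_two, Matrix.tail_cons]
    rw [Real.cosh_sub]; ring
  intro s hs
  constructor
  · -- the derivative statement
    have hcd : HasDerivAt (fun u => ι (c u)) (ι (T s)) s :=
      (LinearMap.toContinuousLinearMap ι).hasFDerivAt.comp_hasDerivAt s (hc s hs)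
    exact hasDerivAt_mink_left (Tt sstar) (hcd.sub (hct s hs))
  · -- the inequality
    have expand : mink (ι (T s) - Tt s) (Tt sstar)
        = mink (ι (T s)) (Tt sstar) - mink (Tt s) (Tt sstar) := by
      simp only [mink, Pi.sub_apply]; ring
    rw [expand, hiota s]
    have := key s hs
    simp only [hgdef] at this
    linarith
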